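/- There exist universal constants C > 0 and c > 0 such that the following holds. Let 0 < p ≤ 1, let X_1, …, X_n be geometric random variables with parameter p, let w_1, …, w_n be positive integers, set X = Σ_{i=1}^n w_i X_i and W = Σ_{i=1}^n w_i, and let D be a dependency graph for X_1, …, X_n. Suppose μ ≥ E[X], δ > 1/p − 1, and d ≥ 1 satisfies Σ_{j ∈ N_D(i) ∪ {i}} w_j ≤ d for every index i, where N_D(i) is the set of neighbors of i in D. Then P[X ≥ μ + δW] ≤ C·d·exp(−c·p²δW/d). -/

import Mathlib

open MeasureTheory ProbabilityTheory
open scoped Classical ENNReal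

section Aux

/-- Greedy multicoloring. -/
lemma exists_coloring (n m : ℕ) (w : Fin n → ℕ) (D : SimpleGraph (Fin n))
    (hm : ∀ i, w i + ∑ j ∈ Finset.univ.filter (fun j => D.Adj i j), w j ≤ m) :
    ∃ col : Fin n → Finset (Fin m), (∀ i, (col i).card = w i) ∧
      ∀ i j, D.Adj i j → Disjoint (col i) (col j) := by
  suffices h : ∀ s : Finset (Fin n), ∃ col : Fin n → Finset (Fin m),
      (∀ i ∈ s, (col i).card = w i) ∧
      ∀ i ∈ s, ∀ j ∈ s, D.Adj i j → Disjoint (col i) (col j) by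
    obtain ⟨col, h1, h2⟩ := h Finset.univ
    exact ⟨col, fun i => h1 i (Finset.mem_univ i),
      fun i j hij => h2 i (Finset.mem_univ i) j (Finset.mem_univ j) hij⟩
  intro s
  induction s using Finset.induction_on with
  | empty => exact ⟨fun _ => ∅, by simp, by simp⟩
  | @insert a s ha ih =>
    obtain ⟨col, h1, h2⟩ := ih
    set B : Finset (Fin m) := (s.filter (fun j => D.Adj a j)).biUnion col with hB
    have hcardB : B.card ≤ ∑ j ∈ Finset.univ.filter (fun j => D.Adj a j), w j := by
      refine (Finset.card_biUnion_le).trans ?_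
      refine (Finset.sum_le_sum (fun j hj => ?_)).trans
        (Finset.sum_le_sum_of_subset (fun j hj => ?_))
      · exact le_of_eq (h1 j (Finset.mem_filter.1 hj).1)
      · simp only [Finset.mem_filter] at hj ⊢
        exact ⟨Finset.mem_univ _, hj.2⟩
    have havail : w a ≤ (Finset.univ \ B).card := by
      have h3 : B.card + w a ≤ m := by
        have := hm a
        omega
      have h4 : (Finset.univ \ B).card = m - B.card := by
        rw [Finset.card_sdiff_of_subset (Finset.subset_univ B), Finset.card_univ, Fintype.card_fin]
      omega
    obtain ⟨t, hts, htcard⟩ := Finset.exists_subset_card_eq havail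
    refine ⟨Function.update col a t, fun i hi => ?_, fun i hi j hj hij => ?_⟩
    · rcases Finset.mem_insert.1 hi with hi2 | hi2
      · subst hi2; simp [htcard]
      · rw [Function.update_of_ne (by rintro rfl; exact ha hi2)]
        exact h1 i hi2
    · have key : ∀ j ∈ s, D.Adj a j → Disjoint t (col j) := by
        intro j hj hadj
        refine Finset.disjoint_left.2 fun x hx hx' => ?_
        have : x ∈ B := Finset.mem_biUnion.2 ⟨j, Finset.mem_filter.2 ⟨hj, hadj⟩, hx'⟩
        exact (Finset.mem_sdiff.1 (hts hx)).2 this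
      rcases Finset.mem_insert.1 hi with hi2 | hi2 <;>
        rcases Finset.mem_insert.1 hj with hj2 | hj2
      · rw [hi2, hj2] at hij; exact absurd hij (D.loopless.irrefl a)
      · rw [hi2] at hij ⊢
        rw [Function.update_self, Function.update_of_ne (by rintro rfl; exact ha hj2)]
        exact key j hj2 hij
      · rw [hj2] at hij ⊢
        rw [Function.update_self, Function.update_of_ne (by rintro rfl; exact ha hi2)]
        exact (key i hi2 hij.symm).symm
      · rw [Function.update_of_ne (by rintro rfl; exact ha hi2),
          Function.update_of_ne (by rintro rfl; exact ha hj2)]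
        exact h2 i hi2 j hj2 hij

variable {Ω : Type} [MeasurableSpace Ω] {μ : Measure Ω} [IsProbabilityMeasure μ]



lemma geom_lintegral {p : ℝ} (hp0 : 0 < p) (hp1 : p ≤ 1)
    {X : Ω → ℕ} (hX : Measurable X)
    (hpmf : ∀ k : ℕ, 1 ≤ k → μ {ω | X ω = k} = ENNReal.ofReal ((1 - p) ^ (k - 1) * p))
    (g : ℕ → ℝ≥0∞) :
    ∫⁻ ω, g (X ω) ∂μ = ∑' k : ℕ, g (k + 1) * ENNReal.ofReal ((1 - p) ^ k * p) := by
  have hq0 : 0 ≤ 1 - p := by linarith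
  have hq1 : 1 - p < 1 := by linarith
  have hsingle : ∀ k : ℕ, μ.map X {k} = μ {ω | X ω = k} := by
    intro k
    rw [Measure.map_apply hX (measurableSet_singleton k)]
    rfl
  have hsum1 : ∑' k : ℕ, ENNReal.ofReal ((1 - p) ^ k * p) = 1 := by
    rw [← ENNReal.ofReal_tsum_of_nonneg (fun k => by positivity)
      (by exact (summable_geometric_of_lt_one hq0 hq1).mul_right p)]
    rw [tsum_mul_right, tsum_geometric_of_lt_one hq0 hq1]
    rw [show (1 - (1 - p))⁻¹ * p = 1 by rw [sub_sub_cancel, inv_mul_cancel₀ hp0.ne']]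
    exact ENNReal.ofReal_one
  have hzero : μ.map X {0} = 0 := by
    have htot : ∑' k : ℕ, μ.map X {k} = 1 := by
      have := lintegral_countable' (μ := μ.map X) (fun _ => (1 : ℝ≥0∞))
      simp only [lintegral_one, one_mul] at this
      rw [← this]
      have : IsProbabilityMeasure (μ.map X) := Measure.isProbabilityMeasure_map hX.aemeasurable
      simp
    rw [tsum_eq_zero_add' ENNReal.summable] at htot
    have htail : ∑' k : ℕ, μ.map X {k + 1} = 1 := by
      rw [← hsum1]
      congr 1 with k
      rw [hsingle, hpmf (k + 1) (by omega)]
      simp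
    rw [htail] at htot
    have := ENNReal.sub_eq_of_eq_add ENNReal.one_ne_top htot.symm
    simpa using this.symm
  rw [← lintegral_map (measurable_from_top) hX, lintegral_countable']
  rw [tsum_eq_zero_add' ENNReal.summable]
  rw [hzero, mul_zero, zero_add]
  congr 1 with k
  rw [hsingle, hpmf (k + 1) (by omega)]
  simp

lemma geom_mgf {p : ℝ} (hp0 : 0 < p) (hp1 : p ≤ 1)
    {X : Ω → ℕ} (hX : Measurable X)
    (hpmf : ∀ k : ℕ, 1 ≤ k → μ {ω | X ω = k} = ENNReal.ofReal ((1 - p) ^ (k - 1) * p))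
    {s : ℝ} (hs0 : 0 ≤ s) (hs : (1 - p) * Real.exp s < 1) :
    ∫⁻ ω, ENNReal.ofReal (Real.exp (s * X ω)) ∂μ
      = ENNReal.ofReal (p * Real.exp s / (1 - (1 - p) * Real.exp s)) := by
  have hq0 : 0 ≤ 1 - p := by linarith
  have hr0 : 0 ≤ (1 - p) * Real.exp s := by positivity
  rw [geom_lintegral hp0 hp1 hX hpmf (fun k => ENNReal.ofReal (Real.exp (s * k)))]
  have hterm : ∀ k : ℕ, ENNReal.ofReal (Real.exp (s * (k + 1 : ℕ)))
      * ENNReal.ofReal ((1 - p) ^ k * p)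
      = ENNReal.ofReal ((p * Real.exp s) * ((1 - p) * Real.exp s) ^ k) := by
    intro k
    rw [← ENNReal.ofReal_mul (by positivity)]
    congr 1
    push_cast
    rw [mul_add, Real.exp_add, mul_pow, ← Real.exp_nat_mul]
    ring_nf
  simp only [hterm]
  rw [← ENNReal.ofReal_tsum_of_nonneg (fun k => by positivity)
    ((summable_geometric_of_lt_one hr0 hs).mul_left _)]
  rw [tsum_mul_left, tsum_geometric_of_lt_one hr0 hs]
  rw [div_eq_mul_inv]

lemma geom_mean {p : ℝ} (hp0 : 0 < p) (hp1 : p ≤ 1)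
    {X : Ω → ℕ} (hX : Measurable X)
    (hpmf : ∀ k : ℕ, 1 ≤ k → μ {ω | X ω = k} = ENNReal.ofReal ((1 - p) ^ (k - 1) * p)) :
    ∫⁻ ω, (X ω : ℝ≥0∞) ∂μ = ENNReal.ofReal (1 / p) := by
  have hq0 : 0 ≤ 1 - p := by linarith
  have hq1 : 1 - p < 1 := by linarith
  have hnorm : ‖1 - p‖ < 1 := by rw [Real.norm_eq_abs, abs_of_nonneg hq0]; exact hq1
  rw [geom_lintegral hp0 hp1 hX hpmf (fun k => (k : ℝ≥0∞))]
  have hterm : ∀ k : ℕ, ((k + 1 : ℕ) : ℝ≥0∞) * ENNReal.ofReal ((1 - p) ^ k * p)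
      = ENNReal.ofReal ((k + 1 : ℝ) * ((1 - p) ^ k * p)) := by
    intro k
    rw [show (((k : ℕ) + 1 : ℕ) : ℝ≥0∞) = ENNReal.ofReal ((k : ℝ) + 1) by
      rw [← ENNReal.ofReal_natCast]; norm_num]
    rw [← ENNReal.ofReal_mul (by positivity)]
  simp only [hterm]
  have hs1 : Summable (fun k : ℕ => (k : ℝ) * (1 - p) ^ k) := by
    simpa using summable_pow_mul_geometric_of_norm_lt_one 1 hnorm
  have hs2 : Summable (fun k : ℕ => (1 - p) ^ k) := summable_geometric_of_lt_one hq0 hq1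
  have hsum : Summable (fun k : ℕ => (k + 1 : ℝ) * ((1 - p) ^ k * p)) := by
    have : (fun k : ℕ => (k + 1 : ℝ) * ((1 - p) ^ k * p))
        = fun k : ℕ => ((k : ℝ) * (1 - p) ^ k) * p + ((1 - p) ^ k) * p := by
      funext k; ring
    rw [this]
    exact ((hs1.mul_right p).add (hs2.mul_right p))
  rw [← ENNReal.ofReal_tsum_of_nonneg (fun k => by positivity) hsum]
  congr 1
  have hval : ∑' k : ℕ, (k + 1 : ℝ) * ((1 - p) ^ k * p)
      = (∑' k : ℕ, (k : ℝ) * (1 - p) ^ k) * p + (∑' k : ℕ, ((1 - p) ^ k : ℝ)) * p := by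
    rw [← tsum_mul_right, ← tsum_mul_right, ← Summable.tsum_add (hs1.mul_right p) (hs2.mul_right p)]
    exact tsum_congr fun k => by ring
  rw [hval, tsum_coe_mul_geometric_of_norm_lt_one hnorm, tsum_geometric_of_lt_one hq0 hq1]
  have hp2 : (1 : ℝ) - (1 - p) = p := by ring
  rw [hp2]
  field_simp
  ring



lemma indep_prod_lintegral {n : ℕ} {X : Fin n → Ω → ℕ} (hX : ∀ i, Measurable (X i))
    {D : SimpleGraph (Fin n)}
    (hindep : ∀ i : Fin n, IndepFun (X i)
      (fun ω (j : {j : Fin n // j ≠ i ∧ ¬D.Adj i j}) => X j.1 ω) μ)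
    (g : Fin n → ℕ → ℝ≥0∞) (s : Finset (Fin n))
    (hs : ∀ i ∈ s, ∀ j ∈ s, i ≠ j → ¬ D.Adj i j) :
    ∫⁻ ω, ∏ i ∈ s, g i (X i ω) ∂μ = ∏ i ∈ s, ∫⁻ ω, g i (X i ω) ∂μ := by
  induction s using Finset.induction_on with
  | empty => simp
  | @insert a s ha ih =>
    have hsub : ∀ j ∈ s, j ≠ a ∧ ¬ D.Adj a j := fun j hj =>
      ⟨fun h => ha (h ▸ hj), fun h => hs a (Finset.mem_insert_self a s) j
        (Finset.mem_insert_of_mem hj) (fun h' => ha (h' ▸ hj)) h⟩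
    -- independence of g a (X a) and the product over s
    set T := fun (ω : Ω) (j : {j : Fin n // j ≠ a ∧ ¬D.Adj a j}) => X j.1 ω with hT
    set ψ : ({j : Fin n // j ≠ a ∧ ¬D.Adj a j} → ℕ) → ℝ≥0∞ :=
      fun v => ∏ j ∈ s.attach, g j.1 (v ⟨j.1, hsub j.1 j.2⟩) with hψ
    have hψmeas : Measurable ψ := by
      apply Finset.measurable_prod
      intro j _
      exact measurable_from_top.comp (measurable_pi_apply _)
    have hindep2 : IndepFun (fun ω => g a (X a ω)) (fun ω => ψ (T ω)) μ :=
      (hindep a).comp measurable_from_top hψmeas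
    have hψval : ∀ ω, ψ (T ω) = ∏ i ∈ s, g i (X i ω) := by
      intro ω
      rw [hψ]
      simp only [hT]
      rw [← Finset.prod_attach s (fun i => g i (X i ω))]
    have hmeasprod : Measurable (fun ω => ∏ i ∈ s, g i (X i ω)) := by
      apply Finset.measurable_prod
      intro i _
      exact measurable_from_top.comp (hX i)
    have step : ∫⁻ ω, g a (X a ω) * (∏ i ∈ s, g i (X i ω)) ∂μ
        = (∫⁻ ω, g a (X a ω) ∂μ) * ∫⁻ ω, ∏ i ∈ s, g i (X i ω) ∂μ := by
      have := lintegral_mul_eq_lintegral_mul_lintegral_of_indepFun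
        (μ := μ) (f := fun ω => g a (X a ω)) (g := fun ω => ∏ i ∈ s, g i (X i ω))
        (measurable_from_top.comp (hX a)) hmeasprod ?_
      · exact this
      · have : (fun ω => ∏ i ∈ s, g i (X i ω)) = (fun ω => ψ (T ω)) := by
          funext ω; rw [hψval ω]
        rw [this]
        exact hindep2
    rw [Finset.prod_insert ha]
    calc ∫⁻ ω, ∏ i ∈ insert a s, g i (X i ω) ∂μ
        = ∫⁻ ω, g a (X a ω) * ∏ i ∈ s, g i (X i ω) ∂μ := by
          congr 1; funext ω; rw [Finset.prod_insert ha]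
      _ = (∫⁻ ω, g a (X a ω) ∂μ) * ∫⁻ ω, ∏ i ∈ s, g i (X i ω) ∂μ := step
      _ = (∫⁻ ω, g a (X a ω) ∂μ) * ∏ i ∈ s, ∫⁻ ω, g i (X i ω) ∂μ := by
          rw [ih (fun i hi j hj hij => hs i (Finset.mem_insert_of_mem hi) j
            (Finset.mem_insert_of_mem hj) hij)]


lemma key_real {p δ : ℝ} (hp0 : 0 < p) (hp1 : p ≤ 1) (hδ : 1 / p - 1 < δ) :
    (1 - p) * Real.exp (p / 8) < 1 ∧
    p * Real.exp (p / 8) / (1 - (1 - p) * Real.exp (p / 8))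
      ≤ Real.exp ((p / 8) * (1 / p + δ) - (1 / 16) * p ^ 2 * δ) := by
  have hp1' : (1:ℝ) ≤ 1 / p := one_le_one_div hp0 hp1
  have hδ0 : 0 < δ := lt_of_le_of_lt (by linarith) hδ
  have hqpδ : 1 - p < δ * p := by
    have := (div_lt_iff₀ hp0).1 (show (1 - p) / p < δ by
      rw [sub_div, div_self hp0.ne']; linarith [hδ])
    linarith
  set s : ℝ := p / 8 with hs
  set q : ℝ := 1 - p with hq
  have hq0 : 0 ≤ q := by rw [hq]; linarith
  have hq1 : q ≤ 1 := by rw [hq]; linarith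
  have hs0 : 0 < s := by positivity
  have hs8 : s ≤ 1 / 8 := by rw [hs]; linarith
  -- exp s ≤ 1 + (8/7) s
  have hexp : Real.exp s ≤ 1 + (8/7) * s := by
    have h := Real.exp_bound_div_one_sub_of_interval hs0.le (by linarith)
    have h2 : 1 / (1 - s) ≤ 1 + (8/7) * s := by
      rw [div_le_iff₀ (by linarith)]
      nlinarith
    linarith
  set z : ℝ := q * (Real.exp s - 1) / p with hz
  have hz0 : 0 ≤ z := by
    have := Real.one_le_exp hs0.le
    rw [hz]
    exact div_nonneg (mul_nonneg hq0 (by linarith)) hp0.le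
  have hz7 : z ≤ q / 7 := by
    rw [hz, div_le_div_iff₀ hp0 (by norm_num)]
    have : Real.exp s - 1 ≤ (8/7) * s := by linarith
    have h8s : 8 * s = p := by rw [hs]; ring
    nlinarith
  have hz1 : z ≤ 1 / 7 := by linarith
  have h1z : 1 - q * Real.exp s = p * (1 - z) := by
    rw [hz]
    field_simp
    ring
  have hpos : 0 < 1 - q * Real.exp s := by
    rw [h1z]
    nlinarith
  constructor
  · linarith
  have hEq : p * Real.exp s / (1 - q * Real.exp s) = Real.exp s * (1 / (1 - z)) := by
    rw [h1z, mul_div_mul_left _ _ hp0.ne', div_eq_mul_inv, one_div]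
  have h1zpos : 0 < 1 - z := by linarith
  have hfrac : 1 / (1 - z) ≤ Real.exp (z / (1 - z)) := by
    have h := Real.add_one_le_exp (z / (1 - z))
    have : z / (1 - z) + 1 = 1 / (1 - z) := by field_simp; ring
    linarith
  have hzz : z / (1 - z) ≤ q / 6 := by
    rw [div_le_iff₀ h1zpos]
    nlinarith
  have harith : s + z / (1 - z) ≤ s * (1 / p + δ) - (1 / 16) * p ^ 2 * δ := by
    have hsp : s * (1 / p) = 1 / 8 := by rw [hs]; field_simp
    have h8s : 8 * s = p := by rw [hs]; ring
    nlinarith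
  calc p * Real.exp s / (1 - q * Real.exp s)
      = Real.exp s * (1 / (1 - z)) := hEq
    _ ≤ Real.exp s * Real.exp (z / (1 - z)) := by
        exact mul_le_mul_of_nonneg_left hfrac (Real.exp_pos s).le
    _ = Real.exp (s + z / (1 - z)) := by rw [Real.exp_add]
    _ ≤ Real.exp (s * (1 / p + δ) - (1 / 16) * p ^ 2 * δ) := Real.exp_le_exp.2 harith

end Aux

set_option maxHeartbeats 1000000 in
/-- Weighted tail bound for geometric random variables with bounded
dependence: there are universal constants `C, c > 0` such that for geometric(p) random
variables `X i` with positive integer weights `w i`, `X = ∑ wᵢXᵢ`, `W = ∑ wᵢ`, a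
dependency graph `D`, `μ₀ ≥ E[X]`, `δ > 1/p - 1`, and `d ≥ 1` bounding the weight of
every closed neighborhood, we have `P[X ≥ μ₀ + δW] ≤ C·d·exp(-c·p²·δ·W/d)`. -/
theorem stmt_4 : ∃ C > (0 : ℝ), ∃ c > (0 : ℝ),
    ∀ (Ω : Type) (_ : MeasurableSpace Ω) (μ : Measure Ω), IsProbabilityMeasure μ →
    ∀ p : ℝ, 0 < p → p ≤ 1 →
    ∀ (n : ℕ) (X : Fin n → Ω → ℕ) (w : Fin n → ℕ),
      (∀ i, Measurable (X i)) →
      (∀ i, ∀ k : ℕ, 1 ≤ k →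
        μ {ω | X i ω = k} = ENNReal.ofReal ((1 - p) ^ (k - 1) * p)) →
      (∀ i, 0 < w i) →
    ∀ D : SimpleGraph (Fin n),
      (∀ i : Fin n, IndepFun (X i)
        (fun ω (j : {j : Fin n // j ≠ i ∧ ¬D.Adj i j}) => X j.1 ω) μ) →
    ∀ μ₀ d : ℝ,
      (∫⁻ ω, ∑ i, (w i : ℝ≥0∞) * (X i ω : ℝ≥0∞) ∂μ) ≤ ENNReal.ofReal μ₀ →
      1 ≤ d →
      (∀ i : Fin n, (w i : ℝ) + ∑ j : Fin n, (if D.Adj i j then (w j : ℝ) else 0) ≤ d) →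
    ∀ δ : ℝ, 1 / p - 1 < δ →
      μ {ω | μ₀ + δ * (∑ i, (w i : ℝ)) ≤ ∑ i, (w i : ℝ) * (X i ω : ℝ)} ≤
        ENNReal.ofReal (C * d * Real.exp (-(c * p ^ 2 * δ * (∑ i, (w i : ℝ)) / d))) := by
  refine ⟨1, one_pos, 1/32, by norm_num, ?_⟩
  intro Ω mΩ μ hμ p hp0 hp1 n X w hXmeas hpmf hwpos D hindep μ₀ d hmean hd hweight δ hδ
  have hδ0 : 0 < δ := by
    have : (1:ℝ) ≤ 1 / p := one_le_one_div hp0 hp1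
    linarith
  have hd0 : 0 < d := lt_of_lt_of_le one_pos hd
  set W : ℕ := ∑ i, w i with hW
  have hWcast : (∑ i, (w i : ℝ)) = (W : ℝ) := by rw [hW]; push_cast; rfl
  rw [hWcast]
  rcases Nat.eq_zero_or_pos W with hW0 | hWpos
  · -- degenerate case W = 0
    have hzero : 1/32 * p ^ 2 * δ * ((W:ℕ) : ℝ) / d = 0 := by rw [hW0]; simp
    calc μ _ ≤ 1 := prob_le_one
      _ ≤ ENNReal.ofReal (1 * d * Real.exp (-(1/32 * p ^ 2 * δ * ((W:ℕ):ℝ) / d))) := by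
          rw [← ENNReal.ofReal_one]
          apply ENNReal.ofReal_le_ofReal
          rw [hzero, neg_zero, Real.exp_zero]
          linarith
  -- main case
  have hWR : (0:ℝ) < (W:ℝ) := by exact_mod_cast hWpos
  obtain ⟨hqe, hφ⟩ := key_real hp0 hp1 hδ
  set s : ℝ := p / 8 with hs
  have hs0 : 0 < s := by positivity
  set φ : ℝ := p * Real.exp s / (1 - (1 - p) * Real.exp s) with hφdef
  have hφpos : 0 < φ := div_pos (by positivity) (by linarith)
  set m : ℕ := ⌈d⌉₊ with hm
  have hm0 : 0 < m := Nat.ceil_pos.2 hd0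
  have hmR : (0:ℝ) < (m:ℝ) := by exact_mod_cast hm0
  have hm2d : (m:ℝ) ≤ 2 * d := by
    have := Nat.ceil_lt_add_one hd0.le
    have : ((⌈d⌉₊ : ℕ) : ℝ) < d + 1 := this
    rw [hm]; linarith
  -- coloring
  have hwm : ∀ i, w i + ∑ j ∈ Finset.univ.filter (fun j => D.Adj i j), w j ≤ m := by
    intro i
    have h1 : ((w i + ∑ j ∈ Finset.univ.filter (fun j => D.Adj i j), w j : ℕ) : ℝ) ≤ d := by
      push_cast
      rw [Finset.sum_filter]
      exact hweight i
    have h2 : ((w i + ∑ j ∈ Finset.univ.filter (fun j => D.Adj i j), w j : ℕ) : ℝ) ≤ (m:ℝ) :=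
      h1.trans (Nat.le_ceil d)
    exact_mod_cast h2
  obtain ⟨col, hcolcard, hcoldisj⟩ := exists_coloring n m w D hwm
  set cls : Fin m → Finset (Fin n) := fun k => Finset.univ.filter (fun i => k ∈ col i) with hcls
  set S : Fin m → Ω → ℕ := fun k ω => ∑ i ∈ cls k, X i ω with hS
  set Nv : Ω → ℕ := fun ω => ∑ i, w i * X i ω with hNv
  have hNmeas : Measurable Nv :=
    Finset.measurable_sum _ (fun i _ => measurable_from_top.comp (hXmeas i))
  have hNS : ∀ ω, (Nv ω : ℝ) = ∑ k : Fin m, (S k ω : ℝ) := by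
    intro ω
    have : ∑ k : Fin m, S k ω = Nv ω := by
      calc ∑ k : Fin m, S k ω
          = ∑ k : Fin m, ∑ i : Fin n, if k ∈ col i then X i ω else 0 := by
            refine Finset.sum_congr rfl fun k _ => ?_
            simp only [hS, hcls]
            rw [Finset.sum_filter]
        _ = ∑ i : Fin n, ∑ k : Fin m, if k ∈ col i then X i ω else 0 := Finset.sum_comm
        _ = ∑ i : Fin n, w i * X i ω := by
            refine Finset.sum_congr rfl fun i _ => ?_
            rw [← Finset.sum_filter, Finset.filter_univ_mem, Finset.sum_const,
              hcolcard i, smul_eq_mul]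
    rw [← this]
    push_cast
    rfl
  have hcards : ∑ k : Fin m, (cls k).card = W := by
    calc ∑ k : Fin m, (cls k).card
        = ∑ k : Fin m, ∑ i : Fin n, if k ∈ col i then 1 else 0 := by
          refine Finset.sum_congr rfl fun k _ => ?_
          simp only [hcls]
          rw [Finset.card_filter]
      _ = ∑ i : Fin n, ∑ k : Fin m, if k ∈ col i then 1 else 0 := Finset.sum_comm
      _ = W := by
          rw [hW]
          refine Finset.sum_congr rfl fun i _ => ?_
          rw [← Finset.sum_filter, Finset.filter_univ_mem, Finset.sum_const,
            hcolcard i, smul_eq_mul, mul_one]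
  -- mean bound
  have hmean2 : (W:ℝ)/p ≤ μ₀ := by
    have hint : ∫⁻ ω, ∑ i, (w i : ℝ≥0∞) * (X i ω : ℝ≥0∞) ∂μ
        = ENNReal.ofReal ((W:ℝ) * (1/p)) := by
      rw [lintegral_finset_sum _ (fun i _ =>
        show Measurable fun ω => (w i : ℝ≥0∞) * (X i ω : ℝ≥0∞) from
          ((measurable_from_top (f := fun v : ℕ => (v : ℝ≥0∞))).comp (hXmeas i)).const_mul _)]
      have : ∀ i, ∫⁻ ω, (w i : ℝ≥0∞) * (X i ω : ℝ≥0∞) ∂μ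
          = (w i : ℝ≥0∞) * ENNReal.ofReal (1/p) := by
        intro i
        rw [lintegral_const_mul _ (show Measurable fun ω => ((X i ω : ℝ≥0∞)) from
          (measurable_from_top (f := fun v : ℕ => (v : ℝ≥0∞))).comp (hXmeas i))]
        rw [geom_mean hp0 hp1 (hXmeas i) (hpmf i)]
      simp_rw [this]
      rw [← Finset.sum_mul]
      rw [show (∑ i, (w i : ℝ≥0∞)) = ((W:ℕ) : ℝ≥0∞) by rw [hW]; push_cast; rfl]
      rw [← ENNReal.ofReal_natCast W, ← ENNReal.ofReal_mul (Nat.cast_nonneg W)]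
    rw [hint] at hmean
    by_contra hcon
    push_neg at hcon
    have : ENNReal.ofReal μ₀ < ENNReal.ofReal ((W:ℝ) * (1/p)) := by
      refine (ENNReal.ofReal_lt_ofReal_iff (by positivity)).2 ?_
      rw [mul_one_div]
      exact hcon
    exact absurd hmean (not_le.2 this)
  set t : ℝ := s / (m:ℝ) with ht
  have ht0 : 0 < t := div_pos hs0 hmR
  -- MGF
  have hM : ∀ i, ∫⁻ ω, ENNReal.ofReal (Real.exp (s * (X i ω : ℝ))) ∂μ = ENNReal.ofReal φ :=
    fun i => geom_mgf hp0 hp1 (hXmeas i) (hpmf i) hs0.le hqe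
  have hclassindep : ∀ k : Fin m, ∀ i ∈ cls k, ∀ j ∈ cls k, i ≠ j → ¬ D.Adj i j := by
    intro k i hi j hj _ hadj
    rw [hcls, Finset.mem_filter] at hi hj
    exact Finset.disjoint_left.1 (hcoldisj i j hadj) hi.2 hj.2
  have hfk : ∀ k : Fin m, ∫⁻ ω, ENNReal.ofReal (Real.exp (s * (S k ω : ℝ))) ∂μ
      = ENNReal.ofReal φ ^ ((cls k).card) := by
    intro k
    have hrw : ∀ ω, ENNReal.ofReal (Real.exp (s * (S k ω : ℝ)))
        = ∏ i ∈ cls k, ENNReal.ofReal (Real.exp (s * (X i ω : ℝ))) := by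
      intro ω
      rw [← ENNReal.ofReal_prod_of_nonneg (fun i _ => (Real.exp_pos _).le), ← Real.exp_sum]
      congr 1
      simp only [hS]
      push_cast
      rw [Finset.mul_sum]
    simp_rw [hrw]
    rw [indep_prod_lintegral hXmeas hindep
      (fun _ v => ENNReal.ofReal (Real.exp (s * (v : ℝ)))) (cls k) (hclassindep k)]
    rw [Finset.prod_congr rfl (fun i _ => hM i), Finset.prod_const]
  set L : ℝ := Real.log φ with hL
  have hφexp : φ = Real.exp L := (Real.exp_log hφpos).symm
  -- Hölder
  have hHolder : ∫⁻ ω, ENNReal.ofReal (Real.exp (t * (Nv ω : ℝ))) ∂μ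
      ≤ ENNReal.ofReal (Real.exp (L * (W:ℝ) / (m:ℝ))) := by
    have hFeq : ∀ ω, ENNReal.ofReal (Real.exp (t * (Nv ω : ℝ)))
        = ∏ k : Fin m, (ENNReal.ofReal (Real.exp (s * (S k ω : ℝ)))) ^ ((m:ℝ)⁻¹) := by
      intro ω
      have hterm : ∀ k : Fin m, (ENNReal.ofReal (Real.exp (s * (S k ω : ℝ)))) ^ ((m:ℝ)⁻¹)
          = ENNReal.ofReal (Real.exp (t * (S k ω : ℝ))) := by
        intro k
        rw [ENNReal.ofReal_rpow_of_pos (Real.exp_pos _), ← Real.exp_mul]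
        congr 1
        rw [ht]
        ring
      simp_rw [hterm]
      rw [← ENNReal.ofReal_prod_of_nonneg (fun _ _ => (Real.exp_pos _).le), ← Real.exp_sum]
      congr 1
      rw [hNS ω, Finset.mul_sum]
    calc ∫⁻ ω, ENNReal.ofReal (Real.exp (t * (Nv ω : ℝ))) ∂μ
        = ∫⁻ ω, ∏ k : Fin m, (ENNReal.ofReal (Real.exp (s * (S k ω : ℝ)))) ^ ((m:ℝ)⁻¹) ∂μ :=
          lintegral_congr fun ω => hFeq ω
      _ ≤ ∏ k : Fin m, (∫⁻ ω, ENNReal.ofReal (Real.exp (s * (S k ω : ℝ))) ∂μ) ^ ((m:ℝ)⁻¹) := by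
          refine ENNReal.lintegral_prod_norm_pow_le Finset.univ (fun k _ => ?_) ?_ (fun k _ => ?_)
          · exact Measurable.aemeasurable
              ((measurable_from_top (f := fun v : ℕ => ENNReal.ofReal (Real.exp (s * (v:ℝ))))).comp
                (show Measurable (S k) from Finset.measurable_sum _ (fun i _ => hXmeas i)))
          · rw [Finset.sum_const, Finset.card_univ, Fintype.card_fin, nsmul_eq_mul]
            field_simp
          · positivity
      _ = ∏ k : Fin m, ENNReal.ofReal (Real.exp (L * ((cls k).card : ℝ) / (m:ℝ))) := by
          refine Finset.prod_congr rfl fun k _ => ?_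
          rw [hfk k, hφexp, ← ENNReal.ofReal_pow (Real.exp_pos _).le,
            ← Real.rpow_natCast (Real.exp L) ((cls k).card), ← Real.exp_mul,
            ENNReal.ofReal_rpow_of_pos (Real.exp_pos _), ← Real.exp_mul]
          rw [show L * ((cls k).card : ℝ) * ((m:ℕ):ℝ)⁻¹ = L * ((cls k).card : ℝ) / ((m:ℕ):ℝ) from (div_eq_mul_inv _ _).symm]
      _ = ENNReal.ofReal (Real.exp (L * (W:ℝ) / (m:ℝ))) := by
          rw [← ENNReal.ofReal_prod_of_nonneg (fun _ _ => (Real.exp_pos _).le), ← Real.exp_sum]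
          congr 1
          have : ∑ k : Fin m, L * ((cls k).card : ℝ) / (m:ℝ)
              = L * (∑ k : Fin m, ((cls k).card : ℝ)) / (m:ℝ) := by
            rw [Finset.mul_sum, Finset.sum_div]
          rw [this]
          congr 2
          rw [← Nat.cast_sum, hcards]
  -- Markov
  set a : ℝ := μ₀ + δ * (W:ℝ) with ha
  have hsub : {ω | μ₀ + δ * ((W:ℕ) : ℝ) ≤ ∑ i, (w i : ℝ) * (X i ω : ℝ)}
      ⊆ {ω | ENNReal.ofReal (Real.exp (t * a))
          ≤ ENNReal.ofReal (Real.exp (t * (Nv ω : ℝ)))} := by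
    intro ω hω
    simp only [Set.mem_setOf_eq] at hω ⊢
    have hNv : (∑ i, (w i : ℝ) * (X i ω : ℝ)) = (Nv ω : ℝ) := by
      simp only [hNv]; push_cast; rfl
    have h1 : a ≤ (Nv ω : ℝ) := by rw [ha, ← hNv]; exact hω
    exact ENNReal.ofReal_le_ofReal (Real.exp_le_exp.2 (mul_le_mul_of_nonneg_left h1 ht0.le))
  -- final real inequality
  have hLb : L ≤ s * (1/p + δ) - (1/16) * p ^ 2 * δ := by
    rw [hL]
    exact (Real.log_le_iff_le_exp hφpos).2 hφ
  have hexpineq : L * (W:ℝ) / (m:ℝ) - t * a ≤ -(1/32 * p ^ 2 * δ * (W:ℝ) / d) := by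
    have hta : (s / (m:ℝ)) * ((W:ℝ)/p + δ * (W:ℝ)) ≤ t * a := by
      rw [ht, ha]
      refine mul_le_mul_of_nonneg_left ?_ (by positivity)
      linarith
    have h1 : L * (W:ℝ) / (m:ℝ) ≤ (s * (1/p + δ) - (1/16) * p ^ 2 * δ) * (W:ℝ) / (m:ℝ) := by
      exact (div_le_div_iff₀ hmR hmR).2
        (mul_le_mul_of_nonneg_right (mul_le_mul_of_nonneg_right hLb (Nat.cast_nonneg W)) hmR.le)
    have hkey : (s * (1/p + δ) - (1/16) * p ^ 2 * δ) * (W:ℝ) / (m:ℝ)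
        - (s / (m:ℝ)) * ((W:ℝ)/p + δ * (W:ℝ)) = -((1/16) * p ^ 2 * δ * (W:ℝ) / (m:ℝ)) := by
      field_simp
      try ring
    have hcomp : (1/32) * p ^ 2 * δ * (W:ℝ) / d ≤ (1/16) * p ^ 2 * δ * (W:ℝ) / (m:ℝ) := by
      rw [div_le_div_iff₀ hd0 hmR]
      nlinarith [sq_nonneg p, mul_pos (mul_pos (mul_pos (by norm_num : (0:ℝ) < 1/32)
        (pow_pos hp0 2)) hδ0) hWR]
    linarith
  have hFmeas : Measurable (fun ω => ENNReal.ofReal (Real.exp (t * (Nv ω : ℝ)))) :=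
    (measurable_from_top (f := fun v : ℕ => ENNReal.ofReal (Real.exp (t * (v:ℝ))))).comp hNmeas
  calc μ {ω | μ₀ + δ * ((W:ℕ) : ℝ) ≤ ∑ i, (w i : ℝ) * (X i ω : ℝ)}
      ≤ μ {ω | ENNReal.ofReal (Real.exp (t * a))
          ≤ ENNReal.ofReal (Real.exp (t * (Nv ω : ℝ)))} := measure_mono hsub
    _ ≤ (∫⁻ ω, ENNReal.ofReal (Real.exp (t * (Nv ω : ℝ))) ∂μ)
          / ENNReal.ofReal (Real.exp (t * a)) :=
        meas_ge_le_lintegral_div hFmeas.aemeasurable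
          (ne_of_gt (ENNReal.ofReal_pos.2 (Real.exp_pos _))) ENNReal.ofReal_ne_top
    _ ≤ ENNReal.ofReal (Real.exp (L * (W:ℝ) / (m:ℝ))) / ENNReal.ofReal (Real.exp (t * a)) :=
        ENNReal.div_le_div_right hHolder _
    _ = ENNReal.ofReal (Real.exp (L * (W:ℝ) / (m:ℝ) - t * a)) := by
        rw [← ENNReal.ofReal_div_of_pos (Real.exp_pos _), ← Real.exp_sub]
    _ ≤ ENNReal.ofReal (1 * d * Real.exp (-(1/32 * p ^ 2 * δ * ((W:ℕ):ℝ) / d))) := by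
        apply ENNReal.ofReal_le_ofReal
        rw [one_mul]
        calc Real.exp (L * (W:ℝ) / (m:ℝ) - t * a)
            ≤ Real.exp (-(1/32 * p ^ 2 * δ * (W:ℝ) / d)) := Real.exp_le_exp.2 hexpineq
          _ ≤ d * Real.exp (-(1/32 * p ^ 2 * δ * ((W:ℕ):ℝ) / d)) := by
              exact le_mul_of_one_le_left (Real.exp_pos _).le hd
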